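/- Let u : ℝ^d → ℝ be continuously differentiable, μ-strongly convex and L-smooth with 0 < μ ≤ L, and let x* be its unique minimizer. For step size 0 < η ≤ 2/L, any point x ∈ ℝ^d, and any random vectors ξ (with E[ξ] = 0, E‖ξ‖² ≤ σ²) and w ~ N(0, I_d) independent of ξ, the update x⁺ = x − η∇u(x) − ηξ + √(2η)·w satisfies E‖x⁺ − x*‖² ≤ (1 − 2μη(1 − ηL/2))·‖x − x*‖² + η²σ² + 2ηd. -/

import Mathlib

/-!
Strong monotonicity and co-coercivity bound `⟪g x - g x*, x - x*⟫` below by both `μ‖x - x*‖²`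
and `‖g x - g x*‖² / L`, which makes the gradient step `x ↦ x - η g x` a contraction towards `x*`
for `η L ≤ 2`. The two noise terms are centred and independent, so every cross term in
`‖x⁺ - x*‖²` vanishes in expectation and only their second moments `η² E‖ξ‖²` and
`2η E‖w‖² = 2η d` are added.
-/

open MeasureTheory ProbabilityTheory
open scoped RealInnerProductSpace

lemma norm_sub_smul_sub_sub_smul_sq_le {E : Type*} [NormedAddCommGroup E]
    [InnerProductSpace ℝ E] {g : E → E} {x y : E} {μ L η : ℝ}
    (hmono : μ * ‖x - y‖ ^ 2 ≤ ⟪g x - g y, x - y⟫)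
    (hcoco : ‖g x - g y‖ ^ 2 ≤ L * ⟪g x - g y, x - y⟫) (hη : 0 ≤ η) (hηL : η * L ≤ 2) :
    ‖(x - η • g x) - (y - η • g y)‖ ^ 2 ≤ (1 - 2 * μ * η * (1 - η * L / 2)) * ‖x - y‖ ^ 2 := by
  have hexpand : ‖(x - η • g x) - (y - η • g y)‖ ^ 2
      = ‖x - y‖ ^ 2 - 2 * η * ⟪g x - g y, x - y⟫ + η ^ 2 * ‖g x - g y‖ ^ 2 := by
    rw [show (x - η • g x) - (y - η • g y) = (x - y) - η • (g x - g y) by module,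
      norm_sub_sq_real, real_inner_smul_right, real_inner_comm, norm_smul, mul_pow,
      Real.norm_eq_abs, sq_abs]
    ring
  have hfactor : 0 ≤ η * (2 - η * L) := mul_nonneg hη (by linarith)
  nlinarith [mul_le_mul_of_nonneg_left hcoco (sq_nonneg η),
    mul_le_mul_of_nonneg_left hmono hfactor]

namespace ProbabilityTheory

section SecondMoment

variable {Ω E : Type*} {mΩ : MeasurableSpace Ω} {P : Measure Ω}
  [NormedAddCommGroup E] [InnerProductSpace ℝ E] [CompleteSpace E]

lemma integral_norm_const_add_sq [IsProbabilityMeasure P] (a : E) {Z : Ω → E}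
    (hZ : MemLp Z 2 P) (hZ0 : P[Z] = 0) :
    ∫ ω, ‖a + Z ω‖ ^ 2 ∂P = ‖a‖ ^ 2 + ∫ ω, ‖Z ω‖ ^ 2 ∂P := by
  have hinner : Integrable (fun ω => ⟪a, Z ω⟫) P :=
    (innerSL ℝ a).integrable_comp (hZ.integrable one_le_two)
  simp_rw [norm_add_sq_real]
  rw [integral_add ((integrable_const _).fun_add (hinner.const_mul 2)) hZ.norm.integrable_sq,
    integral_add (integrable_const _) (hinner.const_mul 2)]
  simp [integral_const_mul, integral_inner (hZ.integrable one_le_two), hZ0]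

variable [MeasurableSpace E] [BorelSpace E]

lemma IndepFun.integral_norm_add_sq [IsFiniteMeasure P] {X Y : Ω → E} (hXY : X ⟂ᵢ[P] Y)
    (hX : MemLp X 2 P) (hY : MemLp Y 2 P) (hX0 : P[X] = 0) :
    ∫ ω, ‖X ω + Y ω‖ ^ 2 ∂P = ∫ ω, ‖X ω‖ ^ 2 ∂P + ∫ ω, ‖Y ω‖ ^ 2 ∂P := by
  have hX1 := hX.integrable one_le_two
  have hY1 := hY.integrable one_le_two
  have hinner : Integrable (fun ω => ⟪X ω, Y ω⟫) P := hXY.integrable_bilin hX1 hY1 (innerSL ℝ)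
  have hinner0 : ∫ ω, ⟪X ω, Y ω⟫ ∂P = 0 := by
    simpa [hX0, innerSL_apply_apply ℝ] using hXY.integral_bilin hX1 hY1 (innerSL ℝ)
  simp_rw [norm_add_sq_real]
  rw [integral_add (hX.norm.integrable_sq.fun_add (hinner.const_mul 2)) hY.norm.integrable_sq,
    integral_add hX.norm.integrable_sq (hinner.const_mul 2)]
  simp [integral_const_mul, hinner0]

variable [IsProbabilityMeasure P] {ξ w : Ω → E}

lemma IndepFun.integral_norm_const_add_smul_add_smul_sq (hξw : ξ ⟂ᵢ[P] w) (hξ : MemLp ξ 2 P)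
    (hw : MemLp w 2 P) (hξ0 : P[ξ] = 0) (hw0 : P[w] = 0) (a : E) (s t : ℝ) :
    ∫ ω, ‖a + s • ξ ω + t • w ω‖ ^ 2 ∂P
      = ‖a‖ ^ 2 + s ^ 2 * ∫ ω, ‖ξ ω‖ ^ 2 ∂P + t ^ 2 * ∫ ω, ‖w ω‖ ^ 2 ∂P := by
  have hsξ : MemLp (fun ω => s • ξ ω) 2 P := hξ.const_smul s
  have htw : MemLp (fun ω => t • w ω) 2 P := hw.const_smul t
  have hindep : (fun ω => s • ξ ω) ⟂ᵢ[P] (fun ω => t • w ω) :=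
    hξw.comp (measurable_const_smul s) (measurable_const_smul t)
  have hsξ0 : ∫ ω, s • ξ ω ∂P = 0 := by rw [integral_smul, hξ0, smul_zero]
  have hsum0 : ∫ ω, (s • ξ ω + t • w ω) ∂P = 0 := by
    rw [integral_add (hsξ.integrable one_le_two) (htw.integrable one_le_two), hsξ0,
      integral_smul, hw0, smul_zero, add_zero]
  simp_rw [add_assoc a]
  rw [integral_norm_const_add_sq (Z := fun ω => s • ξ ω + t • w ω) a (hsξ.add htw) hsum0,
    hindep.integral_norm_add_sq hsξ htw hsξ0]
  simp only [norm_smul, mul_pow, Real.norm_eq_abs, sq_abs, integral_const_mul]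
  ring

lemma IndepFun.integral_norm_const_add_smul_add_smul_sq_le (hξw : ξ ⟂ᵢ[P] w)
    (hξ : Integrable ξ P) (hw : MemLp w 2 P) (hξ0 : P[ξ] = 0) (hw0 : P[w] = 0) (a : E)
    {s : ℝ} (hs : s ≠ 0) (t : ℝ) :
    ∫ ω, ‖a + s • ξ ω + t • w ω‖ ^ 2 ∂P
      ≤ ‖a‖ ^ 2 + s ^ 2 * ∫ ω, ‖ξ ω‖ ^ 2 ∂P + t ^ 2 * ∫ ω, ‖w ω‖ ^ 2 ∂P := by
  by_cases hξ2 : MemLp ξ 2 P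
  · exact (hξw.integral_norm_const_add_smul_add_smul_sq hξ2 hw hξ0 hw0 a s t).le
  -- Off `L²` both integrals involving `ξ` take the junk value `0`: the step is not in `L²`
  -- either, since `ξ` is an affine function of the step and `w`.
  have hstep : ¬ Integrable (fun ω => ‖a + s • ξ ω + t • w ω‖ ^ 2) P := by
    intro h
    have hv : MemLp (fun ω => a + s • ξ ω + t • w ω) 2 P :=
      (memLp_two_iff_integrable_sq_norm
        ((aestronglyMeasurable_const.add (hξ.1.const_smul s)).add (hw.1.const_smul t))).2 h
    apply hξ2
    convert ((hv.sub (memLp_const a)).sub (hw.const_smul t)).const_smul s⁻¹ using 1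
    funext ω
    simp only [Pi.smul_apply, Pi.sub_apply]
    rw [show a + s • ξ ω + t • w ω - a - t • w ω = s • ξ ω by abel, smul_smul,
      inv_mul_cancel₀ hs, one_smul]
  rw [integral_undef hstep,
    integral_undef fun h => hξ2 ((memLp_two_iff_integrable_sq_norm hξ.1).2 h)]
  positivity

end SecondMoment

section StdGaussian

variable {E : Type*} [NormedAddCommGroup E] [InnerProductSpace ℝ E] [FiniteDimensional ℝ E]
  [MeasurableSpace E] [BorelSpace E]

lemma integral_norm_sq_stdGaussian : ∫ x, ‖x‖ ^ 2 ∂stdGaussian E = Module.finrank ℝ E := by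
  let b := stdOrthonormalBasis ℝ E
  have hmemLp : MemLp id 2 (stdGaussian E) := IsGaussian.memLp_two_id
  have hcoord (i) : ∫ x, ⟪b i, x⟫ ^ 2 ∂stdGaussian E = 1 := by
    have h := covarianceBilin_apply hmemLp (b i) (b i)
    simp only [covarianceBilin_stdGaussian, innerSL_apply_apply ℝ, b.inner_eq_one, id_eq,
      integral_id_stdGaussian, sub_zero, ← sq] at h
    exact h.symm
  simp_rw [← b.sum_sq_inner_right]
  rw [integral_finsetSum (f := fun i x => ⟪b i, x⟫ ^ 2) _
    fun i _ => (hmemLp.const_inner (b i)).integrable_sq]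
  simp [hcoord]

variable {Ω : Type*} {mΩ : MeasurableSpace Ω} {P : Measure Ω} {w : Ω → E}

lemma HasLaw.memLp_two_of_stdGaussian (hw : HasLaw w (stdGaussian E) P) : MemLp w 2 P :=
  (memLp_map_measure_iff aestronglyMeasurable_id hw.aemeasurable).1
    (hw.map_eq ▸ IsGaussian.memLp_two_id)

lemma HasLaw.integral_eq_zero_of_stdGaussian (hw : HasLaw w (stdGaussian E) P) : P[w] = 0 :=
  hw.integral_eq.trans integral_id_stdGaussian

lemma HasLaw.integral_norm_sq_of_stdGaussian (hw : HasLaw w (stdGaussian E) P) :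
    ∫ ω, ‖w ω‖ ^ 2 ∂P = Module.finrank ℝ E :=
  (hw.integral_comp (f := fun x => ‖x‖ ^ 2) (by fun_prop)).trans integral_norm_sq_stdGaussian

end StdGaussian

lemma hasLaw_stdGaussian_of_map_ofLp {ι Ω : Type*} [Fintype ι] {mΩ : MeasurableSpace Ω}
    {P : Measure Ω} {w : Ω → EuclideanSpace ℝ ι}
    (hw : P.map (fun ω => WithLp.ofLp (w ω)) = Measure.pi fun _ => gaussianReal 0 1) :
    HasLaw w (stdGaussian (EuclideanSpace ℝ ι)) P :=
  -- `w` is a.e.-measurable because its pushforward is not the zero measure.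
  have hcoord : HasLaw (fun ω => WithLp.ofLp (w ω)) (Measure.pi fun _ => gaussianReal 0 1) P :=
    ⟨.of_map_ne_zero (hw ▸ IsProbabilityMeasure.ne_zero _), hw⟩
  have htoLp : HasLaw (WithLp.toLp 2) (stdGaussian (EuclideanSpace ℝ ι))
      (Measure.pi fun _ : ι => gaussianReal 0 1) := ⟨by fun_prop, map_pi_eq_stdGaussian⟩
  htoLp.comp hcoord

end ProbabilityTheory

theorem sgld_one_step_contraction_general
    (d : ℕ) {Ω : Type*} [MeasurableSpace Ω] (μP : Measure Ω) [IsProbabilityMeasure μP]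
    (g : EuclideanSpace ℝ (Fin d) → EuclideanSpace ℝ (Fin d))
    (μ L : ℝ)
    (hmono : ∀ x y, μ * ‖x - y‖ ^ 2 ≤ (inner ℝ (g x - g y) (x - y) : ℝ))
    (hcoco : ∀ x y, ‖g x - g y‖ ^ 2 ≤ L * (inner ℝ (g x - g y) (x - y) : ℝ))
    (xstar : EuclideanSpace ℝ (Fin d)) (hstar : g xstar = 0)
    (η : ℝ) (hη : 0 < η) (hη2 : η ≤ 2 / L)
    (σ : ℝ)
    (ξ w : Ω → EuclideanSpace ℝ (Fin d))
    (hξint : Integrable ξ μP)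
    (hξmean : ∫ ω, ξ ω ∂μP = 0)
    (hξvar : ∫ ω, ‖ξ ω‖ ^ 2 ∂μP ≤ σ ^ 2)
    (hw : Measure.map (fun ω => WithLp.ofLp (w ω)) μP = Measure.pi (fun _ : Fin d => gaussianReal 0 1))
    (hindep : IndepFun ξ w μP)
    (x : EuclideanSpace ℝ (Fin d)) :
    ∫ ω, ‖(x - η • g x - η • ξ ω + Real.sqrt (2 * η) • w ω) - xstar‖ ^ 2 ∂μP
      ≤ (1 - 2 * μ * η * (1 - η * L / 2)) * ‖x - xstar‖ ^ 2
        + η ^ 2 * σ ^ 2 + 2 * η * d := by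
  have hL : 0 < L := (div_pos_iff_of_pos_left two_pos).1 (hη.trans_le hη2)
  have hdrift :
      ‖x - η • g x - xstar‖ ^ 2 ≤ (1 - 2 * μ * η * (1 - η * L / 2)) * ‖x - xstar‖ ^ 2 := by
    simpa [hstar] using norm_sub_smul_sub_sub_smul_sq_le (hmono x xstar) (hcoco x xstar) hη.le
      ((le_div_iff₀ hL).1 hη2)
  have hlaw := hasLaw_stdGaussian_of_map_ofLp hw
  calc ∫ ω, ‖(x - η • g x - η • ξ ω + Real.sqrt (2 * η) • w ω) - xstar‖ ^ 2 ∂μP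
      = ∫ ω, ‖(x - η • g x - xstar) + (-η) • ξ ω + Real.sqrt (2 * η) • w ω‖ ^ 2 ∂μP := by
        congr with ω
        congr 2
        module
    _ ≤ ‖x - η • g x - xstar‖ ^ 2 + (-η) ^ 2 * ∫ ω, ‖ξ ω‖ ^ 2 ∂μP
          + Real.sqrt (2 * η) ^ 2 * ∫ ω, ‖w ω‖ ^ 2 ∂μP :=
        hindep.integral_norm_const_add_smul_add_smul_sq_le hξint hlaw.memLp_two_of_stdGaussian
          hξmean hlaw.integral_eq_zero_of_stdGaussian _ (neg_ne_zero.2 hη.ne') _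
    _ ≤ _ := by
        rw [hlaw.integral_norm_sq_of_stdGaussian, finrank_euclideanSpace_fin, neg_sq,
          Real.sq_sqrt (by positivity)]
        linarith [mul_le_mul_of_nonneg_left hξvar (sq_nonneg η)]

theorem sgld_one_step_contraction
    (d : ℕ) {Ω : Type*} [MeasurableSpace Ω] (μP : Measure Ω) [IsProbabilityMeasure μP]
    (u : EuclideanSpace ℝ (Fin d) → ℝ)
    (g : EuclideanSpace ℝ (Fin d) → EuclideanSpace ℝ (Fin d))
    (hgrad : ∀ x, HasGradientAt u (g x) x)
    (μ L : ℝ) (hμ : 0 < μ) (hμL : μ ≤ L)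
    (hmono : ∀ x y, μ * ‖x - y‖ ^ 2 ≤ (inner ℝ (g x - g y) (x - y) : ℝ))
    (hcoco : ∀ x y, ‖g x - g y‖ ^ 2 ≤ L * (inner ℝ (g x - g y) (x - y) : ℝ))
    (xstar : EuclideanSpace ℝ (Fin d)) (hstar : g xstar = 0)
    (η : ℝ) (hη : 0 < η) (hη2 : η ≤ 2 / L)
    (σ : ℝ) (hσ : 0 ≤ σ)
    (ξ w : Ω → EuclideanSpace ℝ (Fin d)) (hξm : Measurable ξ) (hwm : Measurable w)
    (hξint : Integrable ξ μP)
    (hξmean : ∫ ω, ξ ω ∂μP = 0)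
    (hξvar : ∫ ω, ‖ξ ω‖ ^ 2 ∂μP ≤ σ ^ 2)
    (hw : Measure.map (fun ω => WithLp.ofLp (w ω)) μP = Measure.pi (fun _ : Fin d => gaussianReal 0 1))
    (hindep : IndepFun ξ w μP)
    (x : EuclideanSpace ℝ (Fin d)) :
    ∫ ω, ‖(x - η • g x - η • ξ ω + Real.sqrt (2 * η) • w ω) - xstar‖ ^ 2 ∂μP
      ≤ (1 - 2 * μ * η * (1 - η * L / 2)) * ‖x - xstar‖ ^ 2
        + η ^ 2 * σ ^ 2 + 2 * η * d :=
  sgld_one_step_contraction_general d μP g μ L hmono hcoco xstar hstar η hη hη2 σ ξ w hξint hξmean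
    hξvar hw hindep x
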